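/- Let θ₁₁ = α₁θ, θ₁₂ = α₂θ with θ inner and α₁, α₂ ∈ ℂ satisfying |α₁|²+|α₂|²=1, and suppose θ₂₁, θ₂₂ in the unit ball of H^∞ satisfy |θ₂₁|²+|θ₂₂|²=1 and α₁θ₂₁ + α₂θ₂₂ = 0 a.e. Then θ′ := \overline{α₂}θ₂₁ − \overline{α₁}θ₂₂ is an inner function, and the subspace { (θ₂₁u₁ + θ₂₂u₂) ⊕ P₋(\overline{θ₁₁}u₁ + \overline{θ₁₂}u₂) : u₁,u₂ ∈ H² } equals θ′H² ⊕ θ̄K_θ. -/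

import Mathlib

open MeasureTheory Complex Real
open scoped ComplexConjugate ENNReal

set_option maxHeartbeats 1000000
noncomputable section

namespace SS

abbrev T : ℝ := 2 * Real.pi

instance : Fact (0 < T) := ⟨by positivity⟩

/-- Normalized Haar (Lebesgue) measure on the circle. -/
abbrev μ : Measure (AddCircle T) := AddCircle.haarAddCircle

/-- The space `L²` of the circle. -/
abbrev L2 := Lp ℂ 2 μ

/-- The Hardy space `H²`: the closed span of the nonnegative Fourier modes. -/
def H2 : Submodule ℂ L2 :=
  (Submodule.span ℂ {f : L2 | ∃ n : ℕ, f = fourierLp 2 (n : ℤ)}).topologicalClosure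

instance : CompleteSpace H2 :=
  (Submodule.isClosed_topologicalClosure _).completeSpace_coe

/-- `H²₋ = L² ⊖ H²`. -/
def H2m : Submodule ℂ L2 := H2ᗮ

instance : CompleteSpace H2m :=
  (Submodule.isClosed_orthogonal H2).completeSpace_coe

/-- Orthogonal projection `P₊` of `L²` onto `H²`, seen as an operator on `L²`. -/
def Pplus : L2 →ₗ[ℂ] L2 := H2.subtype.comp H2.orthogonalProjectionOnto.toLinearMap

/-- Orthogonal projection `P₋` of `L²` onto `H²₋`, seen as an operator on `L²`. -/
def Pminus : L2 →ₗ[ℂ] L2 := H2m.subtype.comp H2m.orthogonalProjectionOnto.toLinearMap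

theorem memL2_mul_of_bound {φ : AddCircle T → ℂ} (hm : AEStronglyMeasurable φ μ)
    {C : ℝ} (hb : ∀ᵐ t ∂μ, ‖φ t‖ ≤ C) (f : L2) :
    MemLp (fun t => φ t * (f : AddCircle T → ℂ) t) 2 μ := by
  have h1 : MemLp φ ∞ μ := memLp_top_of_bound hm C hb
  exact (Lp.memLp f).mul' h1

/-- Multiplication by a bounded measurable function, as an operator on `L²`. -/
def mulOp (φ : AddCircle T → ℂ) (hm : AEStronglyMeasurable φ μ)
    {C : ℝ} (hb : ∀ᵐ t ∂μ, ‖φ t‖ ≤ C) : L2 →ₗ[ℂ] L2 where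
  toFun f := (memL2_mul_of_bound hm hb f).toLp _
  map_add' f g := by
    apply Lp.ext
    filter_upwards [MemLp.coeFn_toLp (memL2_mul_of_bound hm hb (f + g)),
      MemLp.coeFn_toLp (memL2_mul_of_bound hm hb f),
      MemLp.coeFn_toLp (memL2_mul_of_bound hm hb g),
      Lp.coeFn_add ((memL2_mul_of_bound hm hb f).toLp _)
        ((memL2_mul_of_bound hm hb g).toLp _),
      Lp.coeFn_add f g] with t h1 h2 h3 h4 h5
    simp only [h1, h4, Pi.add_apply, h2, h3, h5]
    ring
  map_smul' c f := by
    apply Lp.ext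
    filter_upwards [MemLp.coeFn_toLp (memL2_mul_of_bound hm hb (c • f)),
      MemLp.coeFn_toLp (memL2_mul_of_bound hm hb f),
      Lp.coeFn_smul c ((memL2_mul_of_bound hm hb f).toLp _),
      Lp.coeFn_smul c f] with t h1 h2 h3 h4
    simp only [RingHom.id_apply, h1, h3, Pi.smul_apply, h2, h4, smul_eq_mul]
    ring

/-- The function `e^{it}` on the circle. -/
def φz : AddCircle T → ℂ := fun t => fourier 1 t

theorem φz_meas : AEStronglyMeasurable φz μ := (fourier 1).continuous.aestronglyMeasurable

theorem φz_bound : ∀ᵐ t ∂μ, ‖φz t‖ ≤ 1 :=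
  Filter.Eventually.of_forall fun t => le_of_eq (Circle.norm_coe _)

/-- Multiplication by `z = e^{it}` on `L²`. -/
def Mz : L2 →ₗ[ℂ] L2 := mulOp φz φz_meas φz_bound

/-- The operator `S ⊕ S₊` on `L² = H² ⊕ H²₋` (internal orthogonal decomposition):
it acts as `Mz` on the `H²`-component and as `P₋ Mz` on the `H²₋`-component. -/
def D : L2 →ₗ[ℂ] L2 := Mz.comp Pplus + (Pminus.comp (Mz.comp Pminus))

/-- The set `φ·M ⊆ L²`, for a function `φ` on the circle and a set `M ⊆ L²`,
defined via a.e. representatives. -/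
def mulSet (φ : AddCircle T → ℂ) (M : Set L2) : Set L2 :=
  {g | ∃ f ∈ M, ⇑g =ᵐ[μ] fun t => φ t * f t}

/-- The model space `K_θ = H² ⊖ θH²`, as a subset of `L²`. -/
def Kset (θ : AddCircle T → ℂ) : Set L2 :=
  {f | f ∈ H2 ∧ ∀ g ∈ mulSet θ (H2 : Set L2), inner (𝕜 := ℂ) g f = 0}

/-- `θ` is (the boundary function of) an inner function: it is measurable, its negative
Fourier coefficients vanish (i.e. it belongs to `H²`, hence to `H^∞`), and it has
unimodular boundary values a.e. -/
structure IsInner (θ : AddCircle T → ℂ) : Prop where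
  meas : AEStronglyMeasurable θ μ
  coeff : ∀ n : ℤ, n < 0 → fourierCoeff θ n = 0
  unimod : ∀ᵐ t ∂μ, ‖θ t‖ = 1

/-- `φ` is (the boundary function of) an element of the closed unit ball of `H^∞`. -/
structure MemBallHinf (φ : AddCircle T → ℂ) : Prop where
  meas : AEStronglyMeasurable φ μ
  coeff : ∀ n : ℤ, n < 0 → fourierCoeff φ n = 0
  bound : ∀ᵐ t ∂μ, ‖φ t‖ ≤ 1

theorem IsInner.memBall {θ : AddCircle T → ℂ} (h : IsInner θ) : MemBallHinf θ :=
  ⟨h.meas, h.coeff, h.unimod.mono fun _ ht => le_of_eq ht⟩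

theorem aeNeg {g g' : AddCircle T → ℂ} (h : g =ᵐ[μ] g') :
    (fun t => g (-t)) =ᵐ[μ] fun t => g' (-t) :=
  (Measure.measurePreserving_neg μ).quasiMeasurePreserving.ae_eq_comp h

theorem memL2_J (f : L2) :
    MemLp (fun t => (fourier (-1) t : ℂ) * (f : L2) (-t)) 2 μ := by
  have h1 : MemLp (fun t : AddCircle T => (f : L2) (-t)) 2 μ :=
    (Lp.memLp f).comp_measurePreserving (Measure.measurePreserving_neg μ)
  have h2 : MemLp (fun t : AddCircle T => (fourier (-1) t : ℂ)) ∞ μ :=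
    memLp_top_of_bound (fourier (-1)).continuous.aestronglyMeasurable 1
      (Filter.Eventually.of_forall fun _ => le_of_eq (Circle.norm_coe _))
  exact h1.mul' h2

/-- The operator `J` on `L²`: `(Jf)(e^{it}) = e^{-it} f(e^{-it})`. -/
def Jop : L2 →ₗ[ℂ] L2 where
  toFun f := (memL2_J f).toLp _
  map_add' f g := by
    apply Lp.ext
    filter_upwards [MemLp.coeFn_toLp (memL2_J (f + g)), MemLp.coeFn_toLp (memL2_J f),
      MemLp.coeFn_toLp (memL2_J g),
      Lp.coeFn_add ((memL2_J f).toLp _) ((memL2_J g).toLp _),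
      aeNeg (Lp.coeFn_add f g)] with t h1 h2 h3 h4 h5
    simp only [h1, h4, Pi.add_apply, h2, h3, h5]
    ring
  map_smul' c f := by
    apply Lp.ext
    filter_upwards [MemLp.coeFn_toLp (memL2_J (c • f)), MemLp.coeFn_toLp (memL2_J f),
      Lp.coeFn_smul c ((memL2_J f).toLp _),
      aeNeg (Lp.coeFn_smul c f)] with t h1 h2 h3 h4
    simp only [RingHom.id_apply, h1, h3, Pi.smul_apply, h2, h4, smul_eq_mul]
    ring

/-- The subspace `Y = {(θ₂₁u₁+θ₂₂u₂) ⊕ P₋(conj θ₁₁ u₁ + conj θ₁₂ u₂) : u₁,u₂ ∈ H²}`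
inside `L² = H² ⊕ H²₋` (internal orthogonal decomposition). -/
def YSet (θ11 θ12 θ21 θ22 : AddCircle T → ℂ) : Set L2 :=
  {y | ∃ u1 ∈ (H2 : Set L2), ∃ u2 ∈ (H2 : Set L2), ∃ g h : L2, g ∈ H2 ∧
    (⇑g =ᵐ[μ] fun t => θ21 t * u1 t + θ22 t * u2 t) ∧
    (⇑h =ᵐ[μ] fun t => (starRingEnd ℂ) (θ11 t) * u1 t + (starRingEnd ℂ) (θ12 t) * u2 t) ∧
    y = g + Pminus h}

/-- `g` is (the boundary function of) an outer function:
`log |g(0)| = ∫ log |g| dm`, where `g(0)` is the 0-th Fourier coefficient. -/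
structure IsOuter (g : AddCircle T → ℂ) : Prop where
  meas : AEStronglyMeasurable g μ
  coeff : ∀ n : ℤ, n < 0 → fourierCoeff g n = 0
  ne_zero : ¬ g =ᵐ[μ] 0
  outer : Real.log ‖fourierCoeff g 0‖ = ∫ t, Real.log ‖g t‖ ∂μ


/-! ### Auxiliary lemmas -/

theorem fourierCoeff_congr {f g : AddCircle T → ℂ} (h : f =ᵐ[μ] g) (n : ℤ) :
    fourierCoeff f n = fourierCoeff g n := by
  unfold fourierCoeff
  exact integral_congr_ae (h.mono fun t ht => by simp only [ht])

theorem coeff_eq_inner (g : L2) (n : ℤ) :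
    fourierCoeff (⇑g) n = inner (𝕜 := ℂ) (fourierLp 2 n : L2) g := by
  rw [MeasureTheory.L2.inner_def]
  unfold fourierCoeff
  refine integral_congr_ae ?_
  filter_upwards [coeFn_fourierLp (T := T) 2 n] with t ht
  rw [ht, RCLike.inner_apply, smul_eq_mul, ← fourier_neg, mul_comm]

theorem mem_H2_iff {f : L2} : f ∈ H2 ↔ ∀ n : ℤ, n < 0 → fourierCoeff (⇑f) n = 0 := by
  constructor
  · intro hf n hn
    rw [coeff_eq_inner]
    have hker : H2 ≤ LinearMap.ker ((innerSL ℂ (fourierLp 2 n : L2) : L2 →L[ℂ] ℂ) : L2 →ₗ[ℂ] ℂ) := by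
      apply Submodule.topologicalClosure_minimal
      · rw [Submodule.span_le]
        rintro g ⟨m, rfl⟩
        simp only [SetLike.mem_coe, LinearMap.mem_ker, ContinuousLinearMap.coe_coe, innerSL_apply_apply]
        have := orthonormal_fourier (T := T)
        rw [orthonormal_iff_ite] at this
        rw [this]
        simp only [ite_eq_right_iff]
        intro h
        omega
      · exact ContinuousLinearMap.isClosed_ker _
    exact hker hf
  · intro hf
    have hsum := HilbertBasis.hasSum_repr (fourierBasis (T := T)) f
    have hmem : f ∈ closure ((Submodule.span ℂ
        {f : L2 | ∃ n : ℕ, f = fourierLp 2 (n : ℤ)}) : Set L2) := by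
      refine mem_closure_of_tendsto hsum ?_
      refine Filter.Eventually.of_forall fun s => ?_
      refine Submodule.sum_mem _ fun i _ => ?_
      rcases lt_or_ge i 0 with hi | hi
      · have : fourierBasis.repr f i = 0 := by
          rw [fourierBasis_repr]; exact hf i hi
        simp [this]
      · refine Submodule.smul_mem _ _ (Submodule.subset_span ?_)
        refine ⟨i.toNat, ?_⟩
        have : (fourierBasis (T := T)) i = fourierLp 2 i := congrFun coe_fourierBasis i
        rw [this]
        congr 1
        omega
    rw [H2, ← SetLike.mem_coe, Submodule.topologicalClosure_coe]
    exact hmem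

theorem mulOp_coeFn (φ : AddCircle T → ℂ) (hm : AEStronglyMeasurable φ μ)
    {C : ℝ} (hb : ∀ᵐ t ∂μ, ‖φ t‖ ≤ C) (f : L2) :
    ⇑(mulOp φ hm hb f) =ᵐ[μ] fun t => φ t * f t :=
  (memL2_mul_of_bound hm hb f).coeFn_toLp

theorem mulOp_eq_of_ae {φ : AddCircle T → ℂ} {hm : AEStronglyMeasurable φ μ}
    {C : ℝ} {hb : ∀ᵐ t ∂μ, ‖φ t‖ ≤ C} {f g : L2}
    (h : ⇑g =ᵐ[μ] fun t => φ t * f t) : g = mulOp φ hm hb f := by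
  apply Lp.ext
  exact h.trans (mulOp_coeFn φ hm hb f).symm

theorem mulOp_continuous (φ : AddCircle T → ℂ) (hm : AEStronglyMeasurable φ μ)
    {C : ℝ} (hb : ∀ᵐ t ∂μ, ‖φ t‖ ≤ C) : Continuous (mulOp φ hm hb) := by
  refine AddMonoidHomClass.continuous_of_bound (mulOp φ hm hb) (max C 0) fun f => ?_
  have h1 : ‖mulOp φ hm hb f‖ = (eLpNorm (fun t => φ t * f t) 2 μ).toReal :=
    Lp.norm_toLp _ (memL2_mul_of_bound hm hb f)
  have h2 : eLpNorm (fun t => φ t * (f : AddCircle T → ℂ) t) 2 μ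
      ≤ eLpNorm (fun t => ((max C 0 : ℝ) : ℂ) * f t) 2 μ := by
    refine eLpNorm_mono_ae ?_
    filter_upwards [hb] with t ht
    rw [norm_mul, norm_mul]
    gcongr
    rw [Complex.norm_real, Real.norm_eq_abs, _root_.abs_of_nonneg (le_max_right C 0)]
    exact le_trans ht (le_max_left _ _)
  have h3 : eLpNorm (fun t => ((max C 0 : ℝ) : ℂ) * (f : AddCircle T → ℂ) t) 2 μ
      = (‖((max C 0 : ℝ) : ℂ)‖₊ : ℝ≥0∞) * eLpNorm (⇑f) 2 μ := by
    exact eLpNorm_const_smul (((max C 0 : ℝ)) : ℂ) (⇑f) (p := (2:ℝ≥0∞)) (μ := μ)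
  rw [h1]
  calc (eLpNorm (fun t => φ t * f t) 2 μ).toReal
      ≤ ((‖((max C 0 : ℝ) : ℂ)‖₊ : ℝ≥0∞) * eLpNorm (⇑f) 2 μ).toReal := by
        refine ENNReal.toReal_mono ?_ (le_trans h2 (le_of_eq h3))
        exact ENNReal.mul_ne_top (by simp) (Lp.eLpNorm_ne_top f)
    _ = max C 0 * ‖f‖ := by
        rw [ENNReal.toReal_mul, Lp.norm_def]
        congr 1
        simp [Complex.norm_real, Real.norm_eq_abs, _root_.abs_of_nonneg (le_max_right C 0)]

theorem conj_meas {φ : AddCircle T → ℂ} (hm : AEStronglyMeasurable φ μ) :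
    AEStronglyMeasurable (fun t => (starRingEnd ℂ) (φ t)) μ :=
  RCLike.continuous_conj.comp_aestronglyMeasurable hm

theorem conj_bound {φ : AddCircle T → ℂ} {C : ℝ} (hb : ∀ᵐ t ∂μ, ‖φ t‖ ≤ C) :
    ∀ᵐ t ∂μ, ‖(starRingEnd ℂ) (φ t)‖ ≤ C := by
  filter_upwards [hb] with t ht using by simpa using ht

theorem inner_mulOp_conj (φ : AddCircle T → ℂ) (hm : AEStronglyMeasurable φ μ)
    {C : ℝ} (hb : ∀ᵐ t ∂μ, ‖φ t‖ ≤ C) (a b : L2) :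
    inner (𝕜 := ℂ) (mulOp (fun t => (starRingEnd ℂ) (φ t)) (conj_meas hm) (conj_bound hb) a) b
      = inner (𝕜 := ℂ) a (mulOp φ hm hb b) := by
  rw [MeasureTheory.L2.inner_def, MeasureTheory.L2.inner_def]
  refine integral_congr_ae ?_
  filter_upwards [mulOp_coeFn _ (conj_meas hm) (conj_bound hb) a, mulOp_coeFn φ hm hb b]
    with t h1 h2
  rw [RCLike.inner_apply, RCLike.inner_apply, h1, h2]
  simp only [map_mul, RingHomCompTriple.comp_apply, RingHom.id_apply, Complex.conj_conj]
  ring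

theorem fourierCoeff_mul_fourier (φ : AddCircle T → ℂ) (m n : ℤ) :
    fourierCoeff (fun t => φ t * fourier m t) n = fourierCoeff φ (n - m) := by
  unfold fourierCoeff
  refine integral_congr_ae (Filter.Eventually.of_forall fun t => ?_)
  have h : (fourier (-(n - m)) t : ℂ) = fourier (-n) t * fourier m t := by
    rw [show -(n - m) = -n + m by ring, fourier_add]
  simp only [smul_eq_mul, h]
  ring

theorem mulOp_mem_H2 {φ : AddCircle T → ℂ} (hm : AEStronglyMeasurable φ μ)
    {C : ℝ} (hb : ∀ᵐ t ∂μ, ‖φ t‖ ≤ C) (hcoeff : ∀ n : ℤ, n < 0 → fourierCoeff φ n = 0)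
    {f : L2} (hf : f ∈ H2) : mulOp φ hm hb f ∈ H2 := by
  rw [mem_H2_iff]
  intro n hn
  set A : L2 := mulOp (fun t => (starRingEnd ℂ) (φ t)) (conj_meas hm) (conj_bound hb)
    (fourierLp 2 n) with hA
  have hco : ∀ g : L2, fourierCoeff (⇑(mulOp φ hm hb g)) n = inner (𝕜 := ℂ) A g := fun g => by
    rw [coeff_eq_inner, ← inner_mulOp_conj φ hm hb]
  rw [hco]
  have hker : H2 ≤ LinearMap.ker ((innerSL ℂ A : L2 →L[ℂ] ℂ) : L2 →ₗ[ℂ] ℂ) := by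
    apply Submodule.topologicalClosure_minimal
    · rw [Submodule.span_le]
      rintro g ⟨m, rfl⟩
      simp only [SetLike.mem_coe, LinearMap.mem_ker, ContinuousLinearMap.coe_coe, innerSL_apply_apply]
      rw [← hco]
      have h1 : fourierCoeff (⇑(mulOp φ hm hb (fourierLp 2 (m : ℤ)))) n
          = fourierCoeff (fun t => φ t * fourier (m : ℤ) t) n := by
        refine fourierCoeff_congr ?_ n
        filter_upwards [mulOp_coeFn φ hm hb (fourierLp 2 (m : ℤ)),
          coeFn_fourierLp (T := T) 2 (m : ℤ)] with t h1 h2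
        rw [h1, h2]
      rw [h1, fourierCoeff_mul_fourier]
      exact hcoeff _ (by omega)
    · exact ContinuousLinearMap.isClosed_ker _
  exact hker hf

theorem Pminus_of_mem_H2 {a : L2} (ha : a ∈ H2) : Pminus a = 0 := by
  have h : a ∈ H2mᗮ := (Submodule.le_orthogonal_orthogonal H2) ha
  simp [Pminus, Submodule.orthogonalProjectionOnto_apply_of_mem_orthogonal h]

theorem Pminus_of_mem_H2m {b : L2} (hb : b ∈ H2m) : Pminus b = b := by
  have h := Submodule.orthogonalProjectionOnto_mem_subspace_eq_self (K := H2m) ⟨b, hb⟩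
  simp [Pminus, h]

theorem fourierCoeff_sub_comb {f g : AddCircle T → ℂ}
    (hf : AEStronglyMeasurable f μ) {Cf : ℝ} (hbf : ∀ᵐ t ∂μ, ‖f t‖ ≤ Cf)
    (hg : AEStronglyMeasurable g μ) {Cg : ℝ} (hbg : ∀ᵐ t ∂μ, ‖g t‖ ≤ Cg)
    (a b : ℂ) (n : ℤ) :
    fourierCoeff (fun t => a * f t - b * g t) n
      = a * fourierCoeff f n - b * fourierCoeff g n := by
  have hif : Integrable (fun t => (fourier (-n) t : ℂ) * f t) μ := by
    have h0 : Integrable f μ := (memLp_top_of_bound hf Cf hbf).integrable le_top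
    exact h0.bdd_mul ((fourier (-n)).continuous.aestronglyMeasurable)
      (Filter.Eventually.of_forall fun x => le_of_eq (Circle.norm_coe _))
  have hig : Integrable (fun t => (fourier (-n) t : ℂ) * g t) μ := by
    have h0 : Integrable g μ := (memLp_top_of_bound hg Cg hbg).integrable le_top
    exact h0.bdd_mul ((fourier (-n)).continuous.aestronglyMeasurable)
      (Filter.Eventually.of_forall fun x => le_of_eq (Circle.norm_coe _))
  unfold fourierCoeff
  have hc : ∀ t : AddCircle T, (fourier (-n) t : ℂ) • (a * f t - b * g t)
      = a • ((fourier (-n) t : ℂ) * f t) - b • ((fourier (-n) t : ℂ) * g t) := by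
    intro t; simp only [smul_eq_mul]; ring
  simp only [hc, smul_eq_mul]
  rw [integral_sub (hif.const_mul a) (hig.const_mul b), integral_const_mul, integral_const_mul]


theorem coeFn_comb (a b : ℂ) (u v : L2) :
    ⇑(a • u + b • v) =ᵐ[μ] fun t => a * u t + b * v t := by
  filter_upwards [Lp.coeFn_add (a • u) (b • v), Lp.coeFn_smul a u, Lp.coeFn_smul b v]
    with t h1 h2 h3
  rw [h1, Pi.add_apply, h2, h3, Pi.smul_apply, Pi.smul_apply, smul_eq_mul, smul_eq_mul]

/-- proportional case: `θ' = conj α₂ θ₂₁ − conj α₁ θ₂₂` is inner and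
`Y = θ'H² ⊕ θ̄K_θ`. -/
theorem stmt9_proportional (θ θ21 θ22 : AddCircle T → ℂ) (α1 α2 : ℂ)
    (hθ : IsInner θ) (h21 : MemBallHinf θ21) (h22 : MemBallHinf θ22)
    (hα : ‖α1‖ ^ 2 + ‖α2‖ ^ 2 = 1)
    (hu2 : ∀ᵐ t ∂μ, ‖θ21 t‖ ^ 2 + ‖θ22 t‖ ^ 2 = 1)
    (hu3 : ∀ᵐ t ∂μ, α1 * θ21 t + α2 * θ22 t = 0) :
    IsInner (fun t => (starRingEnd ℂ) α2 * θ21 t - (starRingEnd ℂ) α1 * θ22 t) ∧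
    YSet (fun t => α1 * θ t) (fun t => α2 * θ t) θ21 θ22
      = {y : L2 | ∃ x ∈ mulSet
            (fun t => (starRingEnd ℂ) α2 * θ21 t - (starRingEnd ℂ) α1 * θ22 t)
            (H2 : Set L2),
          ∃ w ∈ mulSet (fun t => (starRingEnd ℂ) (θ t)) (Kset θ), y = x + w} := by
  classical
  have hθb : ∀ᵐ t ∂μ, ‖θ t‖ ≤ 1 := hθ.unimod.mono fun _ h => le_of_eq h
  have hαc : (starRingEnd ℂ) α1 * α1 + (starRingEnd ℂ) α2 * α2 = 1 := by
    have n1 : Complex.normSq α1 = ‖α1‖ ^ 2 := by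
      rw [← Complex.sq_norm]
    have n2 : Complex.normSq α2 = ‖α2‖ ^ 2 := by
      rw [← Complex.sq_norm]
    rw [mul_comm _ α1, mul_comm _ α2, Complex.mul_conj, Complex.mul_conj, n1, n2]
    exact_mod_cast congrArg (fun x : ℝ => (x : ℂ)) hα
  set θ' : AddCircle T → ℂ :=
    fun t => (starRingEnd ℂ) α2 * θ21 t - (starRingEnd ℂ) α1 * θ22 t with hθ'
  clear_value θ'
  have hae : ∀ᵐ t ∂μ, θ21 t = α2 * θ' t ∧ θ22 t = -(α1 * θ' t) := by
    filter_upwards [hu3] with t ht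
    constructor
    · simp only [hθ']
      linear_combination (starRingEnd ℂ) α1 * ht - θ21 t * hαc
    · simp only [hθ']
      linear_combination (starRingEnd ℂ) α2 * ht - θ22 t * hαc
  have hunim : ∀ᵐ t ∂μ, ‖θ' t‖ = 1 := by
    filter_upwards [hae, hu2] with t h12 h3
    rw [h12.1, h12.2] at h3
    simp only [norm_mul, norm_neg] at h3
    have hr2 : ‖θ' t‖ ^ 2 = 1 := by linear_combination h3 - ‖θ' t‖ ^ 2 * hα
    nlinarith [hr2, norm_nonneg (θ' t), sq_nonneg (‖θ' t‖ - 1), sq_nonneg (‖θ' t‖ + 1)]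
  have hmeas' : AEStronglyMeasurable θ' μ := by
    rw [hθ']
    exact (h21.meas.const_mul _).sub (h22.meas.const_mul _)
  have hcoeff' : ∀ n : ℤ, n < 0 → fourierCoeff θ' n = 0 := by
    intro n hn
    rw [hθ', fourierCoeff_sub_comb h21.meas h21.bound h22.meas h22.bound,
      h21.coeff n hn, h22.coeff n hn]
    ring
  have hinner' : IsInner θ' := ⟨hmeas', hcoeff', hunim⟩
  have hb' : ∀ᵐ t ∂μ, ‖θ' t‖ ≤ 1 := hunim.mono fun _ h => le_of_eq h
  refine ⟨hinner', ?_⟩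
  have F1 : ∀ f : L2, mulOp (fun t => (starRingEnd ℂ) (θ t)) (conj_meas hθ.meas)
      (conj_bound hθb) (mulOp θ hθ.meas hθb f) = f := by
    intro f
    symm
    apply mulOp_eq_of_ae
    filter_upwards [mulOp_coeFn θ hθ.meas hθb f, hθ.unimod] with t h1 h2
    rw [h1]
    have huni : (starRingEnd ℂ) (θ t) * θ t = 1 := by
      rw [mul_comm, Complex.mul_conj, ← Complex.sq_norm, h2]
      norm_num
    calc (f : AddCircle T → ℂ) t = ((starRingEnd ℂ) (θ t) * θ t) * f t := by
          rw [huni, one_mul]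
      _ = (starRingEnd ℂ) (θ t) * (θ t * f t) := by ring
  have F2 : ∀ k : L2, k ∈ Kset θ → mulOp (fun t => (starRingEnd ℂ) (θ t))
      (conj_meas hθ.meas) (conj_bound hθb) k ∈ H2m := by
    intro k hk
    rw [H2m, Submodule.mem_orthogonal]
    intro u hu
    have h1 : inner (𝕜 := ℂ) (mulOp (fun t => (starRingEnd ℂ) (θ t)) (conj_meas hθ.meas)
        (conj_bound hθb) k) u = inner (𝕜 := ℂ) k (mulOp θ hθ.meas hθb u) :=
      inner_mulOp_conj θ hθ.meas hθb k u
    have h2 : inner (𝕜 := ℂ) (mulOp θ hθ.meas hθb u) k = 0 :=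
      hk.2 _ ⟨u, hu, mulOp_coeFn θ hθ.meas hθb u⟩
    rw [← inner_conj_symm, h1, inner_conj_symm, h2]
  have F3 : ∀ w : L2, w ∈ H2 → ∃ q k : L2, w = q + k ∧ q ∈ H2 ∧
      mulOp (fun t => (starRingEnd ℂ) (θ t)) (conj_meas hθ.meas) (conj_bound hθb) q ∈ H2 ∧
      k ∈ Kset θ := by
    intro w hw
    set N : Submodule ℂ L2 := (Submodule.map (mulOp θ hθ.meas hθb) H2).topologicalClosure
      with hN
    haveI : CompleteSpace N :=
      (Submodule.isClosed_topologicalClosure _).completeSpace_coe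
    have hNle : N ≤ H2 := by
      apply Submodule.topologicalClosure_minimal
      · rintro x hx
        obtain ⟨f, hf, rfl⟩ := hx
        exact mulOp_mem_H2 hθ.meas hθb hθ.coeff hf
      · exact Submodule.isClosed_topologicalClosure _
    set q : L2 := (N.orthogonalProjectionOnto w : L2) with hq
    have hq' : q ∈ closure ((Submodule.map (mulOp θ hθ.meas hθb) H2 : Set L2)) := by
      have h0 : q ∈ (N : Set L2) := (N.orthogonalProjectionOnto w).2
      rwa [hN, Submodule.topologicalClosure_coe] at h0
    have hMcq : mulOp (fun t => (starRingEnd ℂ) (θ t)) (conj_meas hθ.meas) (conj_bound hθb) q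
        ∈ H2 := by
      have hmaps : Set.MapsTo (mulOp (fun t => (starRingEnd ℂ) (θ t)) (conj_meas hθ.meas)
          (conj_bound hθb)) ((Submodule.map (mulOp θ hθ.meas hθb) H2 : Set L2))
          (H2 : Set L2) := by
        rintro x ⟨f, hf, rfl⟩
        simpa [F1 f] using hf
      have hcl := map_mem_closure
        (mulOp_continuous _ (conj_meas hθ.meas) (conj_bound hθb)) hq' hmaps
      have hH2cl : IsClosed (H2 : Set L2) := Submodule.isClosed_topologicalClosure _
      rwa [hH2cl.closure_eq] at hcl
    refine ⟨q, w - q, by abel, hNle (N.orthogonalProjectionOnto w).2, hMcq, ?_, ?_⟩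
    · exact H2.sub_mem hw (hNle (N.orthogonalProjectionOnto w).2)
    · intro g hg
      obtain ⟨f, hf, hgae⟩ := hg
      have hgeq : g = mulOp θ hθ.meas hθb f := mulOp_eq_of_ae hgae
      have hgN : g ∈ N := by
        rw [hgeq]
        exact Submodule.le_topologicalClosure _ ⟨f, hf, rfl⟩
      have horth := Submodule.sub_starProjection_mem_orthogonal (K := N) w
      exact (Submodule.mem_orthogonal N _).1 horth g hgN
  ext y
  simp only [YSet, Set.mem_setOf_eq]
  constructor
  · rintro ⟨u1, hu1, u2, hu2', g, h, hgH2, hgae, hhae, rfl⟩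
    set w0 : L2 := (starRingEnd ℂ) α1 • u1 + (starRingEnd ℂ) α2 • u2 with hw0
    have hw0H2 : w0 ∈ H2 := H2.add_mem (H2.smul_mem _ hu1) (H2.smul_mem _ hu2')
    have hh : h = mulOp (fun t => (starRingEnd ℂ) (θ t)) (conj_meas hθ.meas)
        (conj_bound hθb) w0 := by
      apply mulOp_eq_of_ae
      filter_upwards [hhae, coeFn_comb ((starRingEnd ℂ) α1) ((starRingEnd ℂ) α2) u1 u2]
        with t h1 h2
      rw [h1, h2]
      simp only [map_mul]
      ring
    obtain ⟨q, k, hqk, hqH2, hMcq, hkK⟩ := F3 w0 hw0H2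
    have hPm : Pminus h = mulOp (fun t => (starRingEnd ℂ) (θ t)) (conj_meas hθ.meas)
        (conj_bound hθb) k := by
      rw [hh, hqk, map_add, map_add, Pminus_of_mem_H2 hMcq, zero_add,
        Pminus_of_mem_H2m (F2 k hkK)]
    refine ⟨g, ⟨α2 • u1 + (-α1) • u2,
        H2.add_mem (H2.smul_mem _ hu1) (H2.smul_mem _ hu2'), ?_⟩,
      mulOp (fun t => (starRingEnd ℂ) (θ t)) (conj_meas hθ.meas) (conj_bound hθb) k,
      ⟨k, hkK, mulOp_coeFn _ (conj_meas hθ.meas) (conj_bound hθb) k⟩, by rw [hPm]⟩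
    filter_upwards [hgae, hae, coeFn_comb α2 (-α1) u1 u2] with t h1 h2 h3
    rw [h1, h3, h2.1, h2.2]
    ring
  · rintro ⟨x, ⟨v, hv, hxae⟩, w, ⟨k, hkK, hwae⟩, rfl⟩
    have hxH2 : x ∈ H2 := by
      rw [mulOp_eq_of_ae (hm := hmeas') (hb := hb') hxae]
      exact mulOp_mem_H2 hmeas' hb' hcoeff' hv
    have hwk : w = mulOp (fun t => (starRingEnd ℂ) (θ t)) (conj_meas hθ.meas)
        (conj_bound hθb) k := mulOp_eq_of_ae hwae
    refine ⟨(starRingEnd ℂ) α2 • v + α1 • k,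
      H2.add_mem (H2.smul_mem _ hv) (H2.smul_mem _ hkK.1),
      (-(starRingEnd ℂ) α1) • v + α2 • k,
      H2.add_mem (H2.smul_mem _ hv) (H2.smul_mem _ hkK.1),
      x, w, hxH2, ?_, ?_, ?_⟩
    · filter_upwards [hxae, hae, coeFn_comb ((starRingEnd ℂ) α2) α1 v k,
        coeFn_comb (-(starRingEnd ℂ) α1) α2 v k] with t h1 h2 h3 h4
      rw [h3, h4, h2.1, h2.2, h1]
      linear_combination -((v : AddCircle T → ℂ) t * θ' t) * hαc
    · filter_upwards [hwae, coeFn_comb ((starRingEnd ℂ) α2) α1 v k,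
        coeFn_comb (-(starRingEnd ℂ) α1) α2 v k] with t h1 h2 h3
      rw [h2, h3, h1]
      simp only [map_mul]
      linear_combination -((starRingEnd ℂ) (θ t) * (k : AddCircle T → ℂ) t) * hαc
    · rw [hwk, Pminus_of_mem_H2m (F2 k hkK)]


end SS
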